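/- Let f satisfy the main assumption on B(0,r) ⊂ R^d. Then there exist C₁ > 0 and λ₁ ∈ N such that for all λ ≥ λ₁, if X₁,…,X_λ are i.i.d. uniform on B(0,r), then E[min_{1≤i≤λ} f(X_i)] ≥ C₁·λ^{−2/d}. -/

import Mathlib

open MeasureTheory

/-- The squared `H`-norm `yᵀ H y`. -/
noncomputable def Hquad {d : ℕ} (H : Matrix (Fin d) (Fin d) ℝ)
    (y : EuclideanSpace ℝ (Fin d)) : ℝ :=
  dotProduct (y : Fin d → ℝ) (H.mulVec (y : Fin d → ℝ))

/-- The `H`-norm `‖y‖_H = √(yᵀ H y)`. -/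
noncomputable def Hnorm {d : ℕ} (H : Matrix (Fin d) (Fin d) ℝ)
    (y : EuclideanSpace ℝ (Fin d)) : ℝ :=
  Real.sqrt (Hquad H y)

/-- The main assumption (Assumption 1 of the paper). -/
structure Assump (d : ℕ) (r : ℝ) (f : EuclideanSpace ℝ (Fin d) → ℝ)
    (xstar : EuclideanSpace ℝ (Fin d)) (H : Matrix (Fin d) (Fin d) ℝ)
    (α : ℝ) (ε : EuclideanSpace ℝ (Fin d) → ℝ) (M : ℝ) : Prop where
  cont : ContinuousOn f (Metric.closedBall 0 r)
  opt_int : ‖xstar‖ < r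
  fopt : f xstar = 0
  fpos : ∀ x ∈ Metric.closedBall (0 : EuclideanSpace ℝ (Fin d)) r, x ≠ xstar → 0 < f x
  symm : H.IsSymm
  posdef : H.PosDef
  alpha_gt : 2 < α
  M_pos : 0 < M
  eps_bdd : ∀ x, |ε x| ≤ M
  feq : ∀ x ∈ Metric.closedBall (0 : EuclideanSpace ℝ (Fin d)) r,
    f x = Hnorm H (x - xstar) ^ 2 + Hnorm H (x - xstar) ^ α * ε (x - xstar)


/-- The uniform probability distribution on the closed Euclidean ball `B(0,r)` in `ℝ^d`. -/
noncomputable def unifBall (d : ℕ) (r : ℝ) : Measure (EuclideanSpace ℝ (Fin d)) :=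
  (volume (Metric.closedBall (0 : EuclideanSpace ℝ (Fin d)) r))⁻¹ •
    volume.restrict (Metric.closedBall (0 : EuclideanSpace ℝ (Fin d)) r)

open ProbabilityTheory

section RSauxsec
open Metric

theorem RSaux.Hquad_cont {d : ℕ} (H : Matrix (Fin d) (Fin d) ℝ) :
    Continuous fun y : EuclideanSpace ℝ (Fin d) => Hquad H y := by
  unfold Hquad dotProduct Matrix.mulVec
  refine continuous_finset_sum _ fun i _ => Continuous.mul (EuclideanSpace.proj i).continuous ?_
  unfold dotProduct
  exact continuous_finset_sum _ fun j _ => continuous_const.mul (EuclideanSpace.proj j).continuous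
theorem RSaux.Hquad_smul {d : ℕ} (H : Matrix (Fin d) (Fin d) ℝ) (c : ℝ) (y : EuclideanSpace ℝ (Fin d)) :
    Hquad H (c • y) = c^2 * Hquad H y := by
  show dotProduct (c • (y : Fin d → ℝ)) (H.mulVec (c • (y : Fin d → ℝ))) = _
  rw [Matrix.mulVec_smul, smul_dotProduct, dotProduct_smul, smul_eq_mul, smul_eq_mul]
  unfold Hquad; ring
theorem RSaux.Hnorm_bounds {d : ℕ} (hd : 0 < d) (H : Matrix (Fin d) (Fin d) ℝ) (hH : H.PosDef) :
    ∃ m₁ m₂ : ℝ, 0 < m₁ ∧ 0 < m₂ ∧ ∀ y : EuclideanSpace ℝ (Fin d),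
      m₁ * ‖y‖ ≤ Hnorm H y ∧ Hnorm H y ≤ m₂ * ‖y‖ := by
  have hS : IsCompact (sphere (0 : EuclideanSpace ℝ (Fin d)) 1) := isCompact_sphere _ _
  have hne : (sphere (0 : EuclideanSpace ℝ (Fin d)) 1).Nonempty := by
    refine ⟨EuclideanSpace.single ⟨0, hd⟩ (1:ℝ), ?_⟩
    simp [mem_sphere_iff_norm, EuclideanSpace.norm_single]
  obtain ⟨u, huS, hu'⟩ := hS.exists_isMinOn hne ((RSaux.Hquad_cont H).continuousOn)
  obtain ⟨v, hvS, hv'⟩ := hS.exists_isMaxOn hne ((RSaux.Hquad_cont H).continuousOn)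
  have hu := isMinOn_iff.1 hu'
  have hv := isMaxOn_iff.1 hv'
  have hupos : 0 < Hquad H u := by
    have hu0 : u ≠ 0 := by
      intro h0
      have : ‖u‖ = 1 := by simpa [mem_sphere_iff_norm] using huS
      rw [h0] at this; simp at this
    simpa [Hquad] using hH.dotProduct_mulVec_pos (x := (u : Fin d → ℝ)) (by simpa using hu0)
  have hvpos : 0 < Hquad H v := hupos.trans_le (hv u huS)
  have key : ∀ y : EuclideanSpace ℝ (Fin d),
      Hquad H u * ‖y‖^2 ≤ Hquad H y ∧ Hquad H y ≤ Hquad H v * ‖y‖^2 := by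
    intro y
    rcases eq_or_ne y 0 with rfl | hy
    · simp [Hquad]
    · have hny : (0:ℝ) < ‖y‖ := norm_pos_iff.2 hy
      set w : EuclideanSpace ℝ (Fin d) := ‖y‖⁻¹ • y with hw
      have hwS : w ∈ sphere (0 : EuclideanSpace ℝ (Fin d)) 1 := by
        simp [hw, mem_sphere_iff_norm, norm_smul, abs_of_pos (inv_pos.2 hny),
          inv_mul_cancel₀ hny.ne']
      have hq : Hquad H y = Hquad H w * ‖y‖^2 := by
        rw [hw, RSaux.Hquad_smul]
        field_simp
      exact ⟨by rw [hq]; nlinarith [hu w hwS, sq_nonneg ‖y‖],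
        by rw [hq]; nlinarith [hv w hwS, sq_nonneg ‖y‖]⟩
  refine ⟨Real.sqrt (Hquad H u), Real.sqrt (Hquad H v), Real.sqrt_pos.2 hupos,
    Real.sqrt_pos.2 hvpos, fun y => ?_⟩
  constructor
  · have := Real.sqrt_le_sqrt (key y).1
    rwa [Real.sqrt_mul hupos.le, Real.sqrt_sq (norm_nonneg y)] at this
  · have := Real.sqrt_le_sqrt (key y).2
    rwa [Real.sqrt_mul hvpos.le, Real.sqrt_sq (norm_nonneg y)] at this
theorem RSaux.sublevel {d : ℕ} (hd : 0 < d) {r : ℝ} {f : EuclideanSpace ℝ (Fin d) → ℝ}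
    {xstar : EuclideanSpace ℝ (Fin d)} {H : Matrix (Fin d) (Fin d) ℝ}
    {α : ℝ} {ε : EuclideanSpace ℝ (Fin d) → ℝ} {M : ℝ}
    (hf : Assump d r f xstar H α ε M) :
    ∃ a > (0:ℝ), ∃ t₀ > (0:ℝ), ∀ t : ℝ, 0 < t → t ≤ t₀ →
      ∀ x ∈ Metric.closedBall (0 : EuclideanSpace ℝ (Fin d)) r,
        f x < t → ‖x - xstar‖ < Real.sqrt (t / a) := by
  obtain ⟨m₁, m₂, hm₁, hm₂, hm⟩ := RSaux.Hnorm_bounds hd H hf.posdef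
  have hα2 : (0:ℝ) < α - 2 := by linarith [hf.alpha_gt]
  set h₀ : ℝ := ((2 * M)⁻¹) ^ ((α - 2)⁻¹ : ℝ) with hh₀
  have hM := hf.M_pos
  have h₀pos : 0 < h₀ := Real.rpow_pos_of_pos (by positivity) _
  have h₀pow : h₀ ^ (α - 2 : ℝ) = (2 * M)⁻¹ := by
    rw [hh₀, ← Real.rpow_mul (by positivity), inv_mul_cancel₀ hα2.ne', Real.rpow_one]
  set δ₁ : ℝ := h₀ / m₂ with hδ₁
  have hδ₁pos : 0 < δ₁ := by positivity
  set a : ℝ := m₁ ^ 2 / 2 with ha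
  have hapos : 0 < a := by positivity
  -- quadratic lower bound near xstar
  have quad : ∀ x ∈ Metric.closedBall (0 : EuclideanSpace ℝ (Fin d)) r,
      ‖x - xstar‖ ≤ δ₁ → a * ‖x - xstar‖ ^ 2 ≤ f x := by
    intro x hx hxd
    rw [hf.feq x hx]
    set y := x - xstar with hy
    set h := Hnorm H y with hhdef
    have hhnn : 0 ≤ h := Real.sqrt_nonneg _
    have hbd := hm y
    rw [← hhdef] at hbd
    have hhle : h ≤ h₀ := by
      calc h ≤ m₂ * ‖y‖ := hbd.2
        _ ≤ m₂ * δ₁ := by nlinarith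
        _ = h₀ := by rw [hδ₁]; field_simp
    have hpow_le : h ^ (α - 2 : ℝ) ≤ (2 * M)⁻¹ := by
      rw [← h₀pow]; exact Real.rpow_le_rpow hhnn hhle hα2.le
    have hMh : M * h ^ (α - 2 : ℝ) ≤ 1 / 2 := by
      calc M * h ^ (α - 2:ℝ) ≤ M * (2 * M)⁻¹ := mul_le_mul_of_nonneg_left hpow_le hM.le
        _ = 1/2 := by field_simp
    have hsplit : h ^ (α : ℝ) = h ^ 2 * h ^ (α - 2 : ℝ) := by
      rcases eq_or_lt_of_le hhnn with h0 | hpos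
      · rw [← h0, Real.zero_rpow (by linarith : α ≠ 0), Real.zero_rpow (ne_of_gt hα2)]
        ring
      · have hα' : (α : ℝ) = 2 + (α - 2) := by ring
        rw [hα', Real.rpow_add hpos, ← Real.rpow_natCast h 2]
        norm_num
    have hεlb : -M ≤ ε y := by cases' abs_le.1 (hf.eps_bdd y) with h1 h2; linarith
    have hαnn : 0 ≤ h ^ (α : ℝ) := Real.rpow_nonneg hhnn _
    have hmul : -(M * h ^ (α:ℝ)) ≤ h ^ (α:ℝ) * ε y := by
      nlinarith [mul_le_mul_of_nonneg_left hεlb hαnn]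
    have hsq : m₁ ^ 2 * ‖y‖ ^ 2 ≤ h ^ 2 := by
      have hms := mul_self_le_mul_self (by positivity : (0:ℝ) ≤ m₁ * ‖y‖) hbd.1
      nlinarith [hms]
    have hMα : M * h ^ (α:ℝ) ≤ h ^ 2 * (1/2) := by
      rw [hsplit]
      nlinarith [sq_nonneg h, Real.rpow_nonneg hhnn (α - 2 : ℝ)]
    rw [ha]
    linarith [hsq, hmul, hMα]
  -- positive lower bound away from xstar
  have hB : IsCompact (Metric.closedBall (0 : EuclideanSpace ℝ (Fin d)) r) :=
    isCompact_closedBall _ _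
  set K := Metric.closedBall (0 : EuclideanSpace ℝ (Fin d)) r ∩ {x | δ₁ ≤ ‖x - xstar‖} with hK
  have hKc : IsCompact K :=
    hB.inter_right (isClosed_le continuous_const ((continuous_id.sub continuous_const).norm))
  obtain ⟨t₀, ht₀pos, ht₀⟩ : ∃ t₀ > (0:ℝ), ∀ x ∈ K, t₀ ≤ f x := by
    rcases K.eq_empty_or_nonempty with hKe | hKne
    · exact ⟨1, one_pos, by rw [hKe]; simp⟩
    · obtain ⟨z, hzK, hz⟩ := hKc.exists_isMinOn hKne
        (hf.cont.mono (by rw [hK]; exact Set.inter_subset_left))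
      refine ⟨f z, ?_, isMinOn_iff.1 hz⟩
      refine hf.fpos z hzK.1 ?_
      intro hzx
      have h2 := hzK.2
      rw [hzx] at h2
      simp only [Set.mem_setOf_eq, sub_self, norm_zero] at h2
      linarith
  refine ⟨a, hapos, t₀, ht₀pos, fun t htpos htle x hx hfx => ?_⟩
  have hxd : ‖x - xstar‖ < δ₁ := by
    by_contra hcon
    push_neg at hcon
    have := ht₀ x ⟨hx, hcon⟩
    linarith
  have hlt : a * ‖x - xstar‖ ^ 2 < t := lt_of_le_of_lt (quad x hx hxd.le) hfx
  have hlt2 : ‖x - xstar‖ ^ 2 < t / a := by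
    rw [lt_div_iff₀ hapos]; linarith [hlt]
  exact (Real.lt_sqrt (norm_nonneg _)).2 hlt2
theorem RSaux.extension {d : ℕ} {r : ℝ} (hr : 0 < r) (f : EuclideanSpace ℝ (Fin d) → ℝ)
    (hc : ContinuousOn f (closedBall 0 r))
    (hnn : ∀ x ∈ closedBall (0 : EuclideanSpace ℝ (Fin d)) r, 0 ≤ f x) :
    ∃ F : EuclideanSpace ℝ (Fin d) → ℝ, Continuous F ∧
      (∀ x ∈ closedBall (0 : EuclideanSpace ℝ (Fin d)) r, F x = f x) ∧
      (∀ x, 0 ≤ F x) ∧ ∃ C, ∀ x, F x ≤ C := by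
  set proj : EuclideanSpace ℝ (Fin d) → EuclideanSpace ℝ (Fin d) :=
    fun x => (r / max r ‖x‖) • x with hproj
  have hmax : ∀ x : EuclideanSpace ℝ (Fin d), 0 < max r ‖x‖ :=
    fun x => lt_of_lt_of_le hr (le_max_left _ _)
  have hcp : Continuous proj := by
    refine Continuous.smul (f := fun x : EuclideanSpace ℝ (Fin d) => r / max r ‖x‖) ?_ continuous_id
    exact continuous_const.div (continuous_const.max continuous_norm) fun x => (hmax x).ne'
  have hmem : ∀ x, proj x ∈ closedBall (0 : EuclideanSpace ℝ (Fin d)) r := by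
    intro x
    rw [mem_closedBall_zero_iff, hproj]
    simp only [norm_smul, Real.norm_eq_abs, abs_of_nonneg (div_nonneg hr.le (hmax x).le)]
    rw [div_mul_eq_mul_div, div_le_iff₀ (hmax x)]
    exact mul_le_mul_of_nonneg_left (le_max_right _ _) hr.le
  have hid : ∀ x ∈ closedBall (0 : EuclideanSpace ℝ (Fin d)) r, proj x = x := by
    intro x hx
    rw [mem_closedBall_zero_iff] at hx
    rw [hproj]
    simp only [max_eq_left hx, div_self hr.ne', one_smul]
  obtain ⟨z, hz, hzmax⟩ := (isCompact_closedBall (0 : EuclideanSpace ℝ (Fin d)) r).exists_isMaxOn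
    ⟨0, mem_closedBall_self hr.le⟩ hc
  refine ⟨f ∘ proj, hc.comp_continuous hcp hmem, fun x hx => by simp [hid x hx], 
    fun x => hnn _ (hmem x), f z, fun x => isMaxOn_iff.1 hzmax _ (hmem x)⟩

end RSauxsec

open Metric

/-- lower bound `E[min_i f(X_i)]` vs `λ^{-2/d}` for random search under
the main assumption, for i.i.d. uniform samples on `B(0,r)`. -/
theorem randomSearch_lower_bound
    {d : ℕ} (hd : 0 < d) {r : ℝ} {f : EuclideanSpace ℝ (Fin d) → ℝ}
    {xstar : EuclideanSpace ℝ (Fin d)} {H : Matrix (Fin d) (Fin d) ℝ}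
    {α : ℝ} {ε : EuclideanSpace ℝ (Fin d) → ℝ} {M : ℝ}
    (hf : Assump d r f xstar H α ε M) :
    ∃ C₁ > (0 : ℝ), ∃ lam₀ : ℕ, ∀ lam : ℕ, lam₀ ≤ lam →
      ∀ (Ω : Type) (mΩ : MeasurableSpace Ω) (P : Measure Ω),
        IsProbabilityMeasure P →
        ∀ X : Fin lam → Ω → EuclideanSpace ℝ (Fin d),
          (∀ i, Measurable (X i)) →
          iIndepFun X P →
          (∀ i, Measure.map (X i) P = unifBall d r) →
          (∫ ω, (⨅ i, f (X i ω)) ∂P) ≥ C₁ * (lam : ℝ) ^ (-(2 : ℝ) / d) := by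
  classical
  have hr : 0 < r := (norm_nonneg xstar).trans_lt hf.opt_int
  set B : Set (EuclideanSpace ℝ (Fin d)) := closedBall 0 r with hBdef
  have hBmeas : MeasurableSet B := measurableSet_closedBall
  set volB : ENNReal := volume B with hvolB
  have hvolBpos : 0 < volB := by
    refine lt_of_lt_of_le (measure_ball_pos volume (0 : EuclideanSpace ℝ (Fin d)) hr) (measure_mono ball_subset_closedBall)
  have hvolBlt : volB < ⊤ := measure_closedBall_lt_top
  -- unifBall of a measurable set
  have hUB : ∀ S : Set (EuclideanSpace ℝ (Fin d)), MeasurableSet S → unifBall d r S = volB⁻¹ * volume (S ∩ B) := by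
    intro S hS
    rw [unifBall, Measure.smul_apply, Measure.restrict_apply hS, smul_eq_mul]
  have hUB1 : unifBall d r B = 1 := by
    rw [hUB B hBmeas, Set.inter_self, ← hvolB, ENNReal.inv_mul_cancel hvolBpos.ne' hvolBlt.ne]
  -- nonnegativity of f on B
  have hfnn : ∀ x ∈ B, 0 ≤ f x := by
    intro x hx
    rcases eq_or_ne x xstar with rfl | hne
    · rw [hf.fopt]
    · exact (hf.fpos x hx hne).le
  -- continuous bounded nonneg extension
  obtain ⟨F, hFc, hFeq, hFnn, Cm, hFC⟩ := RSaux.extension hr f hf.cont hfnn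
  obtain ⟨a, hapos, t₀, ht₀pos, hsub⟩ := RSaux.sublevel hd hf
  -- constants
  set K₀ : ENNReal := volB⁻¹ * volume (ball (0:EuclideanSpace ℝ (Fin d)) 1) with hK₀
  have hK₀lt : K₀ < ⊤ :=
    ENNReal.mul_lt_top (ENNReal.inv_lt_top.2 hvolBpos) measure_ball_lt_top
  set c₀ : ℝ := K₀.toReal / a ^ ((d:ℝ)/2) + 1 with hc₀
  have hc₀pos : 0 < c₀ := by
    have h := div_nonneg (ENNReal.toReal_nonneg (a := K₀)) (Real.rpow_nonneg hapos.le ((d:ℝ)/2))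
    rw [hc₀]; linarith
  have hdR : (0:ℝ) < d := Nat.cast_pos.2 hd
  -- sublevel measure bound
  have hmb : ∀ t : ℝ, 0 < t → t ≤ t₀ →
      (unifBall d r (B ∩ {x | F x < t})).toReal ≤ c₀ * t ^ ((d:ℝ)/2) := by
    intro t htpos htle
    set s : ℝ := Real.sqrt (t / a) with hs
    have hsnn : 0 ≤ s := Real.sqrt_nonneg _
    have hsubset : B ∩ {x | F x < t} ⊆ closedBall xstar s := by
      intro x hx
      rw [mem_closedBall, dist_eq_norm]
      exact (hsub t htpos htle x hx.1 (by rw [← hFeq x hx.1]; exact hx.2)).le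
    have hSmeas : MeasurableSet (B ∩ {x | F x < t}) :=
      hBmeas.inter (measurableSet_lt hFc.measurable measurable_const)
    have hvol : volume (B ∩ {x | F x < t} ∩ B) ≤ ENNReal.ofReal (s ^ d) * volume (ball (0:EuclideanSpace ℝ (Fin d)) 1) := by
      refine le_trans (measure_mono (Set.inter_subset_left.trans hsubset)) ?_
      rw [Measure.addHaar_closedBall volume xstar hsnn, finrank_euclideanSpace_fin]
    have hple : unifBall d r (B ∩ {x | F x < t}) ≤ ENNReal.ofReal (s ^ d) * K₀ := by
      rw [hUB _ hSmeas, hK₀]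
      calc volB⁻¹ * volume (B ∩ {x | F x < t} ∩ B) ≤ volB⁻¹ * (ENNReal.ofReal (s ^ d) * volume (ball (0:EuclideanSpace ℝ (Fin d)) 1)) :=
            mul_le_mul_right hvol _
        _ = ENNReal.ofReal (s ^ d) * (volB⁻¹ * volume (ball (0:EuclideanSpace ℝ (Fin d)) 1)) := by ring
    have hsd : s ^ d = t ^ ((d:ℝ)/2) / a ^ ((d:ℝ)/2) := by
      rw [hs, Real.sqrt_eq_rpow, ← Real.rpow_natCast ((t/a) ^ ((1:ℝ)/2)) d,
        ← Real.rpow_mul (div_nonneg htpos.le hapos.le),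
        show (1:ℝ)/2 * (d:ℕ) = (d:ℝ)/2 from by push_cast; ring,
        Real.div_rpow htpos.le hapos.le]
    have htop : ENNReal.ofReal (s ^ d) * K₀ ≠ ⊤ := ENNReal.mul_ne_top ENNReal.ofReal_ne_top hK₀lt.ne
    calc (unifBall d r (B ∩ {x | F x < t})).toReal
        ≤ (ENNReal.ofReal (s ^ d) * K₀).toReal := ENNReal.toReal_mono htop hple
      _ = s ^ d * K₀.toReal := by
          rw [ENNReal.toReal_mul, ENNReal.toReal_ofReal (pow_nonneg hsnn d)]
      _ = t ^ ((d:ℝ)/2) * (K₀.toReal / a ^ ((d:ℝ)/2)) := by rw [hsd]; ring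
      _ ≤ t ^ ((d:ℝ)/2) * c₀ := by
          refine mul_le_mul_of_nonneg_left ?_ (Real.rpow_nonneg htpos.le _)
          rw [hc₀]; linarith
      _ = c₀ * t ^ ((d:ℝ)/2) := mul_comm _ _
  -- complement split
  have hGmeas : ∀ t : ℝ, MeasurableSet (B ∩ {x | t ≤ F x}) := fun t =>
    hBmeas.inter (measurableSet_le measurable_const hFc.measurable)
  have hsplitq : ∀ t : ℝ,
      (unifBall d r (B ∩ {x | t ≤ F x})).toReal = 1 - (unifBall d r (B ∩ {x | F x < t})).toReal := by
    intro t
    have hdisj : Disjoint (B ∩ {x | t ≤ F x}) (B ∩ {x | F x < t}) := by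
      refine Set.disjoint_left.2 fun x hx1 hx2 => ?_
      have h1 : t ≤ F x := hx1.2
      have h2 : F x < t := hx2.2
      exact absurd h2 (not_lt.2 h1)
    have hBadm : MeasurableSet (B ∩ {x | F x < t}) :=
      hBmeas.inter (measurableSet_lt hFc.measurable measurable_const)
    have hunion : (B ∩ {x | t ≤ F x}) ∪ (B ∩ {x | F x < t}) = B := by
      ext x
      constructor
      · rintro (h | h) <;> exact h.1
      · intro hx
        rcases le_or_gt t (F x) with h | h
        · exact Or.inl ⟨hx, h⟩
        · exact Or.inr ⟨hx, h⟩
    have hsum : unifBall d r (B ∩ {x | t ≤ F x}) + unifBall d r (B ∩ {x | F x < t}) = 1 := by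
      rw [← measure_union hdisj hBadm, hunion, hUB1]
    have hq1 : unifBall d r (B ∩ {x | t ≤ F x}) ≠ ⊤ := by
      intro h; rw [h] at hsum; simp at hsum
    have hp1 : unifBall d r (B ∩ {x | F x < t}) ≠ ⊤ := by
      intro h; rw [h] at hsum; simp at hsum
    have := congrArg ENNReal.toReal hsum
    rw [ENNReal.toReal_add hq1 hp1, ENNReal.toReal_one] at this
    linarith
  -- choose constants
  set c : ℝ := (2 * c₀) ^ (-(2:ℝ)/d) with hc
  have hcpos : 0 < c := Real.rpow_pos_of_pos (by positivity) _
  obtain ⟨N, hN⟩ := exists_nat_ge ((c / t₀) ^ ((d:ℝ)/2))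
  refine ⟨c / 2, by positivity, N + 1, fun lam hlam Ω mΩ P hP X hXm hXind hXmap => ?_⟩
  have hlam1 : 1 ≤ lam := le_trans (Nat.le_add_left 1 N) hlam
  haveI : Nonempty (Fin lam) := ⟨⟨0, hlam1⟩⟩
  have hlamR : (1:ℝ) ≤ (lam:ℝ) := by exact_mod_cast hlam1
  have hlampos : (0:ℝ) < lam := by linarith
  set t : ℝ := c * (lam:ℝ) ^ (-(2:ℝ)/d) with ht
  have htpos : 0 < t := mul_pos hcpos (Real.rpow_pos_of_pos hlampos _)
  -- t ≤ t₀
  have htle : t ≤ t₀ := by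
    have hNlam : ((c / t₀) ^ ((d:ℝ)/2)) ≤ (lam:ℝ) := by
      refine hN.trans ?_
      exact_mod_cast le_trans (Nat.le_succ N) hlam
    have h1 : (c / t₀) ≤ (lam:ℝ) ^ ((2:ℝ)/d) := by
      have := Real.rpow_le_rpow (Real.rpow_nonneg (by positivity) _) hNlam
        (by positivity : (0:ℝ) ≤ (2:ℝ)/d)
      rwa [← Real.rpow_mul (by positivity : (0:ℝ) ≤ c / t₀),
        show ((d:ℝ)/2) * ((2:ℝ)/d) = 1 by field_simp, Real.rpow_one] at this
    have h2 : (lam:ℝ) ^ (-(2:ℝ)/d) = ((lam:ℝ) ^ ((2:ℝ)/d))⁻¹ := by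
      rw [neg_div, Real.rpow_neg hlampos.le]
    rw [ht, h2]
    rw [mul_inv_le_iff₀ (Real.rpow_pos_of_pos hlampos _)]
    calc c ≤ (c / t₀) * t₀ := by field_simp; exact le_rfl
      _ ≤ (lam:ℝ) ^ ((2:ℝ)/d) * t₀ := by
          refine mul_le_mul_of_nonneg_right h1 ht₀pos.le
      _ = t₀ * (lam:ℝ) ^ ((2:ℝ)/d) := mul_comm _ _
  -- key identity
  have hkey : c₀ * t ^ ((d:ℝ)/2) = 1 / (2 * lam) := by
    have h1 : t ^ ((d:ℝ)/2) = c ^ ((d:ℝ)/2) * ((lam:ℝ) ^ (-(2:ℝ)/d)) ^ ((d:ℝ)/2) := by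
      rw [ht, Real.mul_rpow hcpos.le (Real.rpow_nonneg hlampos.le _)]
    have h2 : ((lam:ℝ) ^ (-(2:ℝ)/d)) ^ ((d:ℝ)/2) = (lam:ℝ)⁻¹ := by
      rw [← Real.rpow_mul hlampos.le, show (-(2:ℝ)/d) * ((d:ℝ)/2) = -1 by field_simp,
        Real.rpow_neg_one]
    have h3 : c ^ ((d:ℝ)/2) = (2 * c₀)⁻¹ := by
      rw [hc, ← Real.rpow_mul (by positivity : (0:ℝ) ≤ 2 * c₀),
        show (-(2:ℝ)/d) * ((d:ℝ)/2) = -1 by field_simp, Real.rpow_neg_one]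
    rw [h1, h2, h3]
    field_simp
  -- the event
  set G : Set (EuclideanSpace ℝ (Fin d)) := B ∩ {x | t ≤ F x} with hG
  have hGm : MeasurableSet G := hGmeas t
  set A : Set Ω := ⋂ i, X i ⁻¹' G with hA
  have hAmeas : MeasurableSet A := MeasurableSet.iInter fun i => hXm i hGm
  set q : ENNReal := unifBall d r G with hq
  have hq1 : q ≤ 1 := by
    rw [hq, ← hUB1]; exact measure_mono Set.inter_subset_left
  have hPA : P A = q ^ lam := by
    rw [hA, hXind.meas_iInter fun i => ⟨G, hGm, rfl⟩]
    have : ∀ i : Fin lam, P (X i ⁻¹' G) = q := by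
      intro i
      rw [← Measure.map_apply (hXm i) hGm, hXmap i, hq]
    rw [Finset.prod_congr rfl fun i _ => this i, Finset.prod_const, Finset.card_univ,
      Fintype.card_fin]
  -- lower bound on q
  have hqre : q.toReal ≥ 1 - 1/(2*lam) := by
    have hth := hsplitq t
    rw [← hG, ← hq] at hth
    have hple := hmb t htpos htle
    rw [hkey] at hple
    rw [hth]
    linarith
  -- bound on (P A).toReal
  have hPAre : (1:ℝ)/2 ≤ (P A).toReal := by
    rw [hPA, ENNReal.toReal_pow]
    have h2l : 1/(2*(lam:ℝ)) ≤ 1/2 := by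
      apply one_div_le_one_div_of_le (by norm_num)
      linarith
    have hb0 : (0:ℝ) ≤ 1 - 1/(2*lam) := by linarith
    have hpow : (1 - 1/(2*(lam:ℝ)))^lam ≤ q.toReal ^ lam := pow_le_pow_left₀ hb0 hqre lam
    have hber : (1:ℝ)/2 ≤ (1 - 1/(2*(lam:ℝ)))^lam := by
      have hm2 : (-2:ℝ) ≤ -(1/(2*(lam:ℝ))) := by linarith
      have h := one_add_mul_le_pow hm2 lam
      rw [← sub_eq_add_neg] at h
      have heq : 1 + (lam:ℝ) * (-(1/(2*(lam:ℝ)))) = 1/2 := by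
        field_simp
        ring
      linarith
    linarith
  -- integrand
  set h' : Ω → ℝ := fun ω => ⨅ i, F (X i ω) with hh'
  have hFm : Measurable F := hFc.measurable
  have hh'm : Measurable h' := Measurable.iInf fun i => hFm.comp (hXm i)
  have hh'nn : ∀ ω, 0 ≤ h' ω := fun ω => le_ciInf fun i => hFnn _
  have hbdd : ∀ ω, BddBelow (Set.range fun i => F (X i ω)) := by
    intro ω
    refine ⟨0, fun z hz => ?_⟩
    rcases hz with ⟨i, rfl⟩
    exact hFnn _
  have hh'le : ∀ ω, h' ω ≤ Cm := fun ω =>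
    ciInf_le_of_le (hbdd ω) ⟨0, hlam1⟩ (hFC _)
  have hint : Integrable h' P := by
    refine (integrable_const Cm).mono' hh'm.aestronglyMeasurable (ae_of_all _ fun ω => ?_)
    rw [Real.norm_eq_abs, abs_of_nonneg (hh'nn ω)]
    exact hh'le ω
  have hcongr : ∫ ω, (⨅ i, f (X i ω)) ∂P = ∫ ω, h' ω ∂P := by
    refine integral_congr_ae ?_
    have hae : ∀ᵐ ω ∂P, ∀ i, X i ω ∈ B := by
      rw [ae_all_iff]
      intro i
      have h0 : P (X i ⁻¹' Bᶜ) = 0 := by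
        rw [← Measure.map_apply (hXm i) hBmeas.compl, hXmap i, hUB _ hBmeas.compl]
        simp
      exact ae_iff.2 h0
    filter_upwards [hae] with ω hω
    exact iInf_congr fun i => (hFeq _ (hω i)).symm
  have hind : ∀ ω, A.indicator (fun _ => t) ω ≤ h' ω := by
    intro ω
    rw [Set.indicator_apply]
    split_ifs with hωA
    · refine le_ciInf fun i => ?_
      have hmem : X i ω ∈ G := Set.mem_iInter.1 hωA i
      exact hmem.2
    · exact hh'nn ω
  have hintind : Integrable (A.indicator fun _ => t) P := (integrable_const t).indicator hAmeas
  have hlow : (P A).toReal * t ≤ ∫ ω, h' ω ∂P := by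
    have hmono := integral_mono hintind hint hind
    rwa [integral_indicator_const t hAmeas, smul_eq_mul] at hmono
  rw [ge_iff_le, hcongr]
  calc c/2 * (lam:ℝ)^(-(2:ℝ)/d) = (1/2) * t := by rw [ht]; ring
    _ ≤ (P A).toReal * t := mul_le_mul_of_nonneg_right hPAre htpos.le
    _ ≤ ∫ ω, h' ω ∂P := hlow
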